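/- arXiv:2101.01519 — 2 statements merged into one kernel-verified Lean document; each statement's English description precedes it below -/
import Mathlib

section
/- Let F be a real Hilbert space, f, c, v ∈ F with v ≠ 0, r > 0, ρ, b ∈ ℝ. If there exists ξ ≥ 0 such that ⟨f + ξ v, c⟩ ≥ r‖f + ξ v‖ + b + ξ ρ, then the intersection of the closed ball B(c, r) with the half-space {w : ⟨v, w⟩ ≤ ρ} is contained in the half-space {w : ⟨f, w⟩ ≥ b}. -/
open RealInnerProductSpace

theorem ball_inter_halfspace_subset_halfspace {F : Type*} [NormedAddCommGroup F]
    [InnerProductSpace ℝ F] [CompleteSpace F] (f c v : F) (hv : v ≠ 0)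
    (r : ℝ) (hr : 0 < r) (ρ b : ℝ)
    (h : ∃ ξ : ℝ, 0 ≤ ξ ∧ ⟪f + ξ • v, c⟫ ≥ r * ‖f + ξ • v‖ + b + ξ * ρ) :
    Metric.closedBall c r ∩ {w : F | ⟪v, w⟫ ≤ ρ} ⊆ {w : F | ⟪f, w⟫ ≥ b} := by
  obtain ⟨ξ, hξ, hc⟩ := h
  intro w ⟨hw1, hw2⟩
  simp only [Set.mem_setOf_eq] at hw2 ⊢
  set g := f + ξ • v with hg
  have h1 : ⟪g, w - c⟫ ≥ -(r * ‖g‖) := by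
    have := abs_real_inner_le_norm g (w - c)
    have hwc : ‖w - c‖ ≤ r := by
      rwa [Metric.mem_closedBall, dist_eq_norm] at hw1
    nlinarith [abs_nonneg (⟪g, w - c⟫ : ℝ), neg_abs_le (⟪g, w - c⟫ : ℝ),
      norm_nonneg g, mul_le_mul_of_nonneg_left hwc (norm_nonneg g)]
  have h2 : ⟪g, w⟫ = ⟪g, c⟫ + ⟪g, w - c⟫ := by
    rw [← inner_add_right, add_sub_cancel]
  have h3 : (⟪g, w⟫ : ℝ) ≥ b + ξ * ρ := by
    rw [h2]; linarith
  have h4 : (⟪g, w⟫ : ℝ) = ⟪f, w⟫ + ξ * ⟪v, w⟫ := by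
    rw [hg, inner_add_left, real_inner_smul_left]
  nlinarith [mul_le_mul_of_nonneg_left hw2 hξ]
end

section
/- Let F be a real Hilbert space, f̂, f₀ ∈ F, b̂ ∈ ℝ^B, γ ∈ ℝ^B with γ ≠ 0, b₀ ∈ ℝ, and Ω₀, Ω ⊆ F nonempty bounded sets with Hausdorff distance d = d_H(Ω₀, Ω). Suppose ⟨f̂ − f₀, g⟩ + ⟨γ, b̂⟩ − b₀ ≥ 0 for all g ∈ Ω₀. Define b̂' = b̂ + (d ‖f̂ − f₀‖ / ‖γ‖²) γ. Then ⟨f̂ − f₀, g⟩ + ⟨γ, b̂'⟩ − b₀ ≥ 0 for all g ∈ Ω. -/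
open RealInnerProductSpace

theorem hausdorff_shift_admissible {F : Type*} [NormedAddCommGroup F]
    [InnerProductSpace ℝ F] [CompleteSpace F] {B : ℕ}
    (fhat f₀ : F) (bhat : EuclideanSpace ℝ (Fin B))
    (γ : EuclideanSpace ℝ (Fin B)) (hγ : γ ≠ 0) (b₀ : ℝ)
    (Ω₀ Ω : Set F) (hΩ₀ne : Ω₀.Nonempty) (hΩne : Ω.Nonempty)
    (hΩ₀bdd : Bornology.IsBounded Ω₀) (hΩbdd : Bornology.IsBounded Ω)
    (hadm : ∀ g ∈ Ω₀, ⟪fhat - f₀, g⟫ + ⟪γ, bhat⟫ - b₀ ≥ 0) :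
    ∀ g ∈ Ω, ⟪fhat - f₀, g⟫ +
      ⟪γ, bhat + ((Metric.hausdorffDist Ω₀ Ω * ‖fhat - f₀‖) / ‖γ‖ ^ 2) • γ⟫ - b₀ ≥ 0 := by
  intro g hg
  set f := fhat - f₀ with hf
  set d := Metric.hausdorffDist Ω₀ Ω with hd
  have hγn : ‖γ‖ ≠ 0 := norm_ne_zero_iff.mpr hγ
  have hinner : ⟪γ, bhat + ((d * ‖f‖) / ‖γ‖ ^ 2) • γ⟫ = ⟪γ, bhat⟫ + d * ‖f‖ := by
    rw [inner_add_right, real_inner_smul_right, real_inner_self_eq_norm_sq]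
    field_simp
  rw [hinner]
  have hedist : EMetric.hausdorffEdist Ω Ω₀ ≠ ⊤ :=
    Metric.hausdorffEdist_ne_top_of_nonempty_of_bounded hΩne hΩ₀ne hΩbdd hΩ₀bdd
  have key : ∀ ε : ℝ, 0 < ε → 0 ≤ ⟪f, g⟫ + ⟪γ, bhat⟫ + d * ‖f‖ - b₀ + ε * (‖f‖ + 1) := by
    intro ε hε
    have hlt : Metric.hausdorffDist Ω Ω₀ < d + ε := by
      rw [Metric.hausdorffDist_comm]
      linarith
    obtain ⟨g₀, hg₀, hdist⟩ := Metric.exists_dist_lt_of_hausdorffDist_lt hg hlt hedist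
    have h1 : ⟪f, g₀⟫ + ⟪γ, bhat⟫ - b₀ ≥ 0 := hadm g₀ hg₀
    have h2 : ⟪f, g₀⟫ - ⟪f, g⟫ ≤ ‖f‖ * (d + ε) := by
      have := real_inner_le_norm f (g₀ - g)
      have hn : ‖g₀ - g‖ ≤ d + ε := by
        rw [← dist_eq_norm, dist_comm]
        exact le_of_lt hdist
      have h3 : ⟪f, g₀ - g⟫ ≤ ‖f‖ * (d + ε) := by
        calc ⟪f, g₀ - g⟫ ≤ ‖f‖ * ‖g₀ - g‖ := this
          _ ≤ ‖f‖ * (d + ε) := by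
            exact mul_le_mul_of_nonneg_left hn (norm_nonneg f)
      rwa [inner_sub_right] at h3
    nlinarith [norm_nonneg f]
  by_contra hcon
  push_neg at hcon
  set x := ⟪f, g⟫ + ⟪γ, bhat⟫ + d * ‖f‖ - b₀ with hx
  have hx0 : x < 0 := by rw [hx]; linarith
  have hεpos : 0 < -x / (2 * (‖f‖ + 1)) := by
    apply div_pos (by linarith)
    nlinarith [norm_nonneg f]
  have := key _ hεpos
  have hfp : (0:ℝ) < ‖f‖ + 1 := by nlinarith [norm_nonneg f]
  rw [div_mul_eq_mul_div, mul_comm (2:ℝ), ← div_div, mul_div_assoc, div_self (ne_of_gt hfp)] at this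
  nlinarith
end
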